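/- arXiv:2109.01515 — 3 statements merged into one kernel-verified Lean document; each statement's English description precedes it below -/
import Mathlib

section
/- Let r > 0 and 0 < x < y be real numbers. Then (ψ(y+r) − ψ(r)) / (ψ(x+r) − ψ(r)) < y/x, where ψ denotes the digamma function. -/
/-- The digamma function `ψ(x) = Γ'(x)/Γ(x)`. -/
noncomputable def digamma (x : ℝ) : ℝ := deriv Real.Gamma x / Real.Gamma x

/-!
For `a > 0` the recurrence `ψ(x + 1) = ψ(x) + 1/x` telescopes to
`ψ(a + t) - ψ(a) = ∑ₖ t / ((a + k)(a + t + k))`, the remainders `ψ(a + t + n) - ψ(a + n)` tending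
to `0` because `ψ` is increasing (log-convexity of `Γ`). Hence `(ψ(a + t) - ψ(a)) / t` is a series
whose terms strictly decrease in `t`, and the inequality is this monotonicity at `t = x < y`.
-/

open Real Filter Topology Finset Set

lemma differentiableAt_log_Gamma {x : ℝ} (hx : 0 < x) : DifferentiableAt ℝ (log ∘ Gamma) x :=
  (differentiableOn_Gamma_Ioi.differentiableAt (Ioi_mem_nhds hx)).log (Gamma_pos_of_pos hx).ne'

lemma digamma_eq_deriv_log_Gamma {x : ℝ} (hx : 0 < x) : digamma x = deriv (log ∘ Gamma) x := by
  rw [Function.comp_def, deriv.log (differentiableOn_Gamma_Ioi.differentiableAt (Ioi_mem_nhds hx))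
    (Gamma_pos_of_pos hx).ne', digamma]

lemma digamma_add_one {x : ℝ} (hx : 0 < x) : digamma (x + 1) = digamma x + x⁻¹ := by
  rw [digamma_eq_deriv_log_Gamma (by linarith), digamma_eq_deriv_log_Gamma hx,
    ← deriv_comp_add_const, ← deriv_log,
    ← deriv_add (differentiableAt_log_Gamma hx) (differentiableAt_log hx.ne')]
  apply EventuallyEq.deriv_eq
  filter_upwards [eventually_gt_nhds hx] with t ht
  simp only [Function.comp_apply, Gamma_add_one ht.ne',
    log_mul ht.ne' (Gamma_pos_of_pos ht).ne', add_comm, Pi.add_apply]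

lemma digamma_monotoneOn : MonotoneOn digamma (Ioi 0) := by
  intro a ha b hb hab
  rw [digamma_eq_deriv_log_Gamma ha, digamma_eq_deriv_log_Gamma hb]
  exact convexOn_log_Gamma.monotoneOn_deriv (fun t ht ↦ differentiableAt_log_Gamma ht) ha hb hab

lemma digamma_add_nat {x : ℝ} (hx : 0 < x) (n : ℕ) :
    digamma (x + n) = digamma x + ∑ k ∈ range n, (x + k)⁻¹ := by
  induction n with
  | zero => simp
  | succ n ih =>
    rw [Nat.cast_succ, ← add_assoc, digamma_add_one (by positivity), ih, sum_range_succ, add_assoc]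

lemma digamma_sub_le_of_le_add_nat {a b : ℝ} (ha : 0 < a) (hab : a ≤ b) (m : ℕ) (hb : b ≤ a + m) :
    digamma b - digamma a ≤ m / a := by
  have hψ : digamma b ≤ digamma (a + m) :=
    digamma_monotoneOn (ha.trans_le hab) (show 0 < a + m by positivity) hb
  have hsum : ∑ k ∈ range m, (a + k)⁻¹ ≤ m / a :=
    calc ∑ k ∈ range m, (a + k)⁻¹ ≤ #(range m) • a⁻¹ :=
          sum_le_card_nsmul _ _ _ fun k _ ↦ inv_anti₀ ha (by simp)
      _ = m / a := by rw [card_range, nsmul_eq_mul, div_eq_mul_inv]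
  rw [digamma_add_nat ha] at hψ
  linarith

lemma tendsto_digamma_add_nat_sub {a b : ℝ} (ha : 0 < a) (hab : a ≤ b) :
    Tendsto (fun n : ℕ ↦ digamma (b + n) - digamma (a + n)) atTop (𝓝 0) := by
  have hb : 0 < b := ha.trans_le hab
  obtain ⟨m, hm⟩ := exists_nat_ge (b - a)
  have hbound : Tendsto (fun n : ℕ ↦ (m : ℝ) / (a + n)) atTop (𝓝 0) :=
    tendsto_const_nhds.div_atTop (tendsto_atTop_add_const_left _ a tendsto_natCast_atTop_atTop)
  refine squeeze_zero (fun n ↦ ?_) (fun n ↦ ?_) hbound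
  · exact sub_nonneg.2 <|
      digamma_monotoneOn (mem_Ioi.2 (by positivity)) (mem_Ioi.2 (by positivity)) (by linarith)
  · exact digamma_sub_le_of_le_add_nat (by positivity) (by linarith) m (by linarith)

lemma hasSum_digamma_add_sub {a t : ℝ} (ha : 0 < a) (ht : 0 ≤ t) :
    HasSum (fun k : ℕ ↦ (a + k)⁻¹ - (a + t + k)⁻¹) (digamma (a + t) - digamma a) := by
  have hterm (k : ℕ) : 0 ≤ (a + k)⁻¹ - (a + t + k)⁻¹ :=
    sub_nonneg.2 (inv_anti₀ (by positivity) (by linarith))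
  rw [hasSum_iff_tendsto_nat_of_nonneg hterm]
  have hpartial (n : ℕ) : ∑ k ∈ range n, ((a + k)⁻¹ - (a + t + k)⁻¹) =
      (digamma (a + t) - digamma a) - (digamma (a + t + n) - digamma (a + n)) := by
    rw [sum_sub_distrib, digamma_add_nat ha, digamma_add_nat (by positivity)]
    ring
  simp only [hpartial]
  simpa using tendsto_const_nhds.sub (tendsto_digamma_add_nat_sub ha (by linarith : a ≤ a + t))

lemma hasSum_digamma_add_sub_div {a t : ℝ} (ha : 0 < a) (ht : 0 < t) :
    HasSum (fun k : ℕ ↦ ((a + k) * (a + t + k))⁻¹) ((digamma (a + t) - digamma a) / t) := by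
  refine (hasSum_digamma_add_sub ha ht.le).div_const t |>.congr_fun fun k ↦ ?_
  have : 0 < a + k := by positivity
  have : 0 < a + t + k := by positivity
  field_simp
  ring

lemma digamma_add_sub_pos {a t : ℝ} (ha : 0 < a) (ht : 0 < t) : 0 < digamma (a + t) - digamma a :=
  (div_pos_iff_of_pos_right ht).1 <| hasSum_lt (i := 0) (fun k ↦ by positivity) (by positivity)
    hasSum_zero (hasSum_digamma_add_sub_div ha ht)

lemma strictAntiOn_digamma_add_sub_div {a : ℝ} (ha : 0 < a) :
    StrictAntiOn (fun t ↦ (digamma (a + t) - digamma a) / t) (Ioi 0) := by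
  intro s (hs : 0 < s) t (ht : 0 < t) hst
  refine hasSum_lt (i := 0) (fun k ↦ ?_) ?_ (hasSum_digamma_add_sub_div ha ht)
    (hasSum_digamma_add_sub_div ha hs)
  · exact inv_anti₀ (by positivity) (by gcongr)
  · exact inv_strictAnti₀ (by positivity) (by gcongr)

theorem digamma_ratio_lt (r x y : ℝ) (hr : 0 < r) (hx : 0 < x) (hxy : x < y) :
    (digamma (y + r) - digamma r) / (digamma (x + r) - digamma r) < y / x := by
  have hy : 0 < y := hx.trans hxy
  have hquot := strictAntiOn_digamma_add_sub_div hr hx hy hxy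
  rw [div_lt_div_iff₀ hy hx] at hquot
  rw [add_comm y, add_comm x, div_lt_div_iff₀ (digamma_add_sub_pos hr hx) hx]
  linarith
end

section
/- Let r ∈ [0, ∞) and let γ_{h^{(r)}} be the common limit of the sequences y_n(r) and z_n(r). For each natural number n ≥ 1, with A(n,r) = h_n^{(r)}/n^r − ∫_n^{n+1} h_x^{(r)}/x^r dx and B(n,r) = ∫_n^{n+1} h_x^{(r)}/x^r dx, one has A(n,r) < γ_{h^{(r)}} − z_n(r) < A(n,r) + h_{n+1}^{(r)}/(n+1)^r, and B(n,r) − h_{n+1}^{(r)}/(n+1)^r < y_n(r) − γ_{h^{(r)}} < B(n,r). -/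
open MeasureTheory Filter Topology

/-- The rising factorial `x^{r̄} = Γ(x+r)/Γ(x)`. -/
noncomputable def rise (x r : ℝ) : ℝ := Real.Gamma (x + r) / Real.Gamma x

/-- The analytic extension of the hyperharmonic numbers:
`h_x^{(r)} = (x^{r̄}/(x Γ(r)))(ψ(x+r) − ψ(r))` for `r > 0`, and `h_x^{(0)} = 1/x`. -/
noncomputable def hyp (r x : ℝ) : ℝ :=
  if r = 0 then 1 / x
  else rise x r / (x * Real.Gamma r) * (digamma (x + r) - digamma r)

/-- `y_n(r) = ∑_{k=1}^n h_k^{(r)}/k^r − ∫_1^n h_x^{(r)}/x^r dx`. -/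
noncomputable def yseq (r : ℝ) (n : ℕ) : ℝ :=
  ∑ k ∈ Finset.Icc 1 n, hyp r k / (k : ℝ) ^ r - ∫ x in (1:ℝ)..(n:ℝ), hyp r x / x ^ r

/-- `z_n(r) = ∑_{k=1}^{n-1} h_k^{(r)}/k^r − ∫_1^n h_x^{(r)}/x^r dx`. -/
noncomputable def zseq (r : ℝ) (n : ℕ) : ℝ :=
  ∑ k ∈ Finset.Icc 1 (n - 1), hyp r k / (k : ℝ) ^ r - ∫ x in (1:ℝ)..(n:ℝ), hyp r x / x ^ r

/-- `b_n(r) = ∑_{k=1}^n h_k^{(r)}/k^{r̄} − ∫_1^n h_x^{(r)}/x^{r̄} dx`. -/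
noncomputable def bseq (r : ℝ) (n : ℕ) : ℝ :=
  ∑ k ∈ Finset.Icc 1 n, hyp r k / rise k r - ∫ x in (1:ℝ)..(n:ℝ), hyp r x / rise x r

/-- `a_n(r) = ∑_{k=1}^{n-1} h_k^{(r)}/k^{r̄} − ∫_1^n h_x^{(r)}/x^{r̄} dx`. -/
noncomputable def aseq (r : ℝ) (n : ℕ) : ℝ :=
  ∑ k ∈ Finset.Icc 1 (n - 1), hyp r k / rise k r - ∫ x in (1:ℝ)..(n:ℝ), hyp r x / rise x r


/-!
For `f x = h_x^{(r)} / x ^ r` we have `z_{n+1} = y_n - ∫_n^{n+1} f` and `y_n = z_n + f n`, so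
everything follows from `f` being strictly decreasing on `[1, ∞)`: then
`f (n+1) < ∫_n^{n+1} f < f n`, the sequence `z` increases and `y` decreases strictly, hence
`z_{n+1} < γ < y_{n+1}`, and the four estimates are these two inequalities rewritten.

For `r = 0`, `f x = 1/x`. For `r > 0` we show `(log f)' < 0`, where
`(log f)' = ψ(x+r) - ψ(x) - (r+1)/x + ψ'(x+r)/D` with `D = ψ(x+r) - ψ(r)`. Everything is read off
the series `ψ(a) - ψ(b) = ∑ₖ (a-b)/((a+k)(b+k))` (obtained by differentiating the Euler limit for
`log Γ`): `D = x ψ'(x+r) + x² T` with `T = ∑ₖ 1/((r+k)(x+r+k)²)`, so `(log f)' < 0` amounts to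
`(ψ(x+r) - ψ(x) - r/x) · D < x T`. Here `ψ(x+r) - ψ(x) - r/x = r(1-r) ∑ₖ 1/((x+k)(x+k+1)(x+r+k))`
and `D ≤ x/r`, which bound the left side by `x/(r(x+r)²)`, the first term of `x T`.
-/

open Real Set

lemma summable_inv_add_sq {c : ℝ} (hc : 0 < c) : Summable fun k : ℕ => ((c + k) ^ 2)⁻¹ := by
  refine ((summable_one_div_nat_add_rpow c 2).2 one_lt_two).congr fun k => ?_
  have : (0 : ℝ) < k + c := by positivity
  rw [abs_of_pos this, one_div, rpow_two, add_comm]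

lemma summable_inv_add_mul_add {a b : ℝ} (ha : 0 < a) (hb : 0 < b) :
    Summable fun k : ℕ => ((a + k) * (b + k))⁻¹ := by
  have hc : 0 < min a b := lt_min ha hb
  refine (summable_inv_add_sq hc).of_nonneg_of_le (fun k => by positivity) fun k => ?_
  gcongr
  rw [sq]
  gcongr <;> simp

lemma hasSum_inv_add_mul_add_one {x : ℝ} (hx : 0 < x) :
    HasSum (fun k : ℕ => ((x + k) * (x + k + 1))⁻¹) x⁻¹ := by
  have hpartial (n : ℕ) :
      ∑ k ∈ Finset.range n, ((x + k) * (x + k + 1))⁻¹ = x⁻¹ - (x + n)⁻¹ := by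
    induction n with
    | zero => simp
    | succ n ih =>
      rw [Finset.sum_range_succ, ih]
      push_cast
      field_simp
      ring
  rw [hasSum_iff_tendsto_nat_of_nonneg (fun k => by positivity)]
  simp_rw [hpartial]
  simpa using tendsto_const_nhds.sub <| tendsto_inv_atTop_zero.comp <|
    Filter.tendsto_atTop_add_const_left _ x tendsto_natCast_atTop_atTop

lemma hasDerivAt_log_Gamma {x : ℝ} (hx : 0 < x) :
    HasDerivAt (fun y => log (Gamma y)) (digamma x) x := by
  have hdiff : DifferentiableAt ℝ Gamma x :=
    differentiableAt_Gamma fun m hm => by linarith [m.cast_nonneg (α := ℝ)]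
  exact hdiff.hasDerivAt.log (Gamma_pos_of_pos hx).ne'

lemma hasDerivAt_logGammaSeq {x : ℝ} (hx : 0 < x) (n : ℕ) :
    HasDerivAt (BohrMollerup.logGammaSeq · n)
      (log n - ∑ m ∈ Finset.range (n + 1), (x + m)⁻¹) x := by
  have hlog (m : ℕ) : HasDerivAt (fun y : ℝ => log (y + m)) (x + m)⁻¹ x := by
    simpa using ((hasDerivAt_id x).add_const (m : ℝ)).log (by positivity)
  unfold BohrMollerup.logGammaSeq
  simpa using (((hasDerivAt_id x).mul_const (log n)).add_const (log n.factorial)).fun_sub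
    (HasDerivAt.fun_sum fun m _ => hlog m)

lemma inv_add_one_sub_inv_add {y : ℝ} (hy : 0 < y) (m : ℕ) :
    ((m : ℝ) + 1)⁻¹ - (y + m)⁻¹ = (y - 1) * ((1 + m) * (y + m))⁻¹ := by
  field_simp
  ring

lemma summable_inv_add_one_sub_inv_add {y : ℝ} (hy : 0 < y) :
    Summable fun m : ℕ => ((m : ℝ) + 1)⁻¹ - (y + m)⁻¹ := by
  simpa only [inv_add_one_sub_inv_add hy] using
    (summable_inv_add_mul_add one_pos hy).mul_left (y - 1)

lemma tendsto_log_sub_harmonic_succ :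
    Tendsto (fun n : ℕ => log n - ∑ m ∈ Finset.range (n + 1), ((m : ℝ) + 1)⁻¹) atTop
      (𝓝 (-eulerMascheroniConstant)) := by
  have h := (tendsto_harmonic_sub_log.neg).sub tendsto_one_div_add_atTop_nhds_zero_nat
  rw [sub_zero] at h
  refine h.congr fun n => ?_
  rw [Finset.sum_range_succ, harmonic, Rat.cast_sum]
  push_cast
  ring

lemma tendstoUniformlyOn_deriv_logGammaSeq {a b : ℝ} (ha : 0 < a) :
    TendstoUniformlyOn (fun (n : ℕ) (y : ℝ) => log n - ∑ m ∈ Finset.range (n + 1), (y + m)⁻¹)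
      (fun y => -eulerMascheroniConstant + ∑' m : ℕ, (((m : ℝ) + 1)⁻¹ - (y + m)⁻¹))
      atTop (Ioo a b) := by
  have hbound (m : ℕ) (y : ℝ) (hy : y ∈ Ioo a b) :
      ‖((m : ℝ) + 1)⁻¹ - (y + m)⁻¹‖ ≤ (b + 1) * ((1 + m) * (a + m))⁻¹ := by
    have hy0 : 0 < y := ha.trans hy.1
    have hpos : 0 < ((1 + m) * (y + m))⁻¹ := by positivity
    rw [inv_add_one_sub_inv_add hy0, norm_mul, Real.norm_of_nonneg hpos.le, Real.norm_eq_abs]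
    have habs : |y - 1| ≤ b + 1 := abs_le.2 ⟨by linarith [hy.2], by linarith [hy.2]⟩
    have hinv : ((1 + m) * (y + m))⁻¹ ≤ ((1 + m) * (a + m))⁻¹ := by gcongr; exact hy.1.le
    exact mul_le_mul habs hinv hpos.le (by linarith [hy.2])
  have hseries := tendstoUniformlyOn_tsum_nat
    ((summable_inv_add_mul_add one_pos ha).mul_left (b + 1)) hbound
  have hshift : TendstoUniformlyOn
      (fun (n : ℕ) (y : ℝ) => ∑ m ∈ Finset.range (n + 1), (((m : ℝ) + 1)⁻¹ - (y + m)⁻¹))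
      (fun y => ∑' m : ℕ, (((m : ℝ) + 1)⁻¹ - (y + m)⁻¹)) atTop (Ioo a b) :=
    fun u hu => (Filter.tendsto_add_atTop_nat 1).eventually (hseries u hu)
  refine (tendsto_log_sub_harmonic_succ.tendstoUniformlyOn_const _ |>.add hshift).congr ?_
  filter_upwards with n y _
  simp only [Pi.add_apply, Finset.sum_sub_distrib]
  ring

lemma digamma_eq_tsum {x : ℝ} (hx : 0 < x) :
    digamma x = -eulerMascheroniConstant + ∑' m : ℕ, (((m : ℝ) + 1)⁻¹ - (x + m)⁻¹) := by
  refine (hasDerivAt_log_Gamma hx).unique <| hasDerivAt_of_tendstoUniformlyOn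
    (f := fun n y => BohrMollerup.logGammaSeq y n) isOpen_Ioo
    (tendstoUniformlyOn_deriv_logGammaSeq (half_pos hx) (b := x + 1)) ?_ ?_
    ⟨by linarith, by linarith⟩
  · filter_upwards with n y hy using hasDerivAt_logGammaSeq (by linarith [hy.1]) n
  · intro y hy
    exact BohrMollerup.tendsto_log_gamma (by linarith [hy.1])

noncomputable def trigamma (x : ℝ) : ℝ := ∑' k : ℕ, ((x + k) ^ 2)⁻¹

lemma trigamma_pos {x : ℝ} (hx : 0 < x) : 0 < trigamma x :=
  (summable_inv_add_sq hx).tsum_pos (fun k => by positivity) 0 (by positivity)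

lemma hasDerivAt_digamma {x : ℝ} (hx : 0 < x) : HasDerivAt digamma (trigamma x) x := by
  have hx2 : x ∈ Ioi (x / 2) := by simp only [mem_Ioi]; linarith
  have hterm (m : ℕ) (y : ℝ) (hy : y ∈ Ioi (x / 2)) :
      HasDerivAt (fun z : ℝ => ((m : ℝ) + 1)⁻¹ - (z + m)⁻¹) ((y + m) ^ 2)⁻¹ y := by
    have hym : 0 < y + m := by linarith [mem_Ioi.1 hy, Nat.cast_nonneg (α := ℝ) m]
    exact (((hasDerivAt_id y).add_const (m : ℝ)).inv hym.ne').const_sub _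
      |>.congr_deriv (by simp; ring)
  have hbound (m : ℕ) (y : ℝ) (hy : y ∈ Ioi (x / 2)) : ‖((y + m) ^ 2)⁻¹‖ ≤ ((x / 2 + m) ^ 2)⁻¹ := by
    simp only [mem_Ioi] at hy
    rw [Real.norm_of_nonneg (by positivity)]
    gcongr
  have hseries := hasDerivAt_tsum_of_isPreconnected (summable_inv_add_sq (half_pos hx))
    isOpen_Ioi isPreconnected_Ioi hterm hbound hx2 (summable_inv_add_one_sub_inv_add hx) hx2
  refine (hseries.const_add (-eulerMascheroniConstant)).congr_of_eventuallyEq ?_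
  filter_upwards [Ioi_mem_nhds hx] with y hy using digamma_eq_tsum hy

lemma hasSum_digamma_sub_digamma {a b : ℝ} (ha : 0 < a) (hb : 0 < b) :
    HasSum (fun k : ℕ => (a - b) * ((a + k) * (b + k))⁻¹) (digamma a - digamma b) := by
  rw [digamma_eq_tsum ha, digamma_eq_tsum hb, add_sub_add_left_eq_sub]
  refine ((summable_inv_add_one_sub_inv_add ha).hasSum.sub
    (summable_inv_add_one_sub_inv_add hb).hasSum).congr_fun fun k => ?_
  field_simp
  ring

section DigammaInequalities

variable {r x : ℝ}

lemma summable_inv_mul_add_sq (hr : 0 < r) (hx : 0 < x) :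
    Summable fun k : ℕ => ((r + k) * (x + r + k) ^ 2)⁻¹ := by
  have hxr : 0 < x + r := by positivity
  refine ((summable_inv_add_mul_add hr hxr).mul_left (x + r)⁻¹).of_nonneg_of_le
    (fun k => by positivity) fun k => ?_
  rw [← mul_inv]
  apply inv_anti₀ (by positivity)
  calc (x + r) * ((r + k) * (x + r + k)) ≤ (x + r + k) * ((r + k) * (x + r + k)) := by
        gcongr ?_ * _; simp
    _ = (r + k) * (x + r + k) ^ 2 := by ring

lemma digamma_add_sub_digamma_eq (hr : 0 < r) (hx : 0 < x) :
    digamma (x + r) - digamma r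
      = x * trigamma (x + r) + x ^ 2 * ∑' k : ℕ, ((r + k) * (x + r + k) ^ 2)⁻¹ := by
  rw [← (hasSum_digamma_sub_digamma (by positivity) hr).tsum_eq, trigamma, ← tsum_mul_left,
    ← tsum_mul_left, ← Summable.tsum_add ((summable_inv_add_sq (by positivity)).mul_left x)
      ((summable_inv_mul_add_sq hr hx).mul_left (x ^ 2))]
  refine tsum_congr fun k => ?_
  field_simp
  ring

lemma digamma_add_sub_digamma_pos (hr : 0 < r) (hx : 0 < x) :
    0 < digamma (x + r) - digamma r := by
  have hP := trigamma_pos (by positivity : 0 < x + r)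
  have hT : 0 ≤ ∑' k : ℕ, ((r + k) * (x + r + k) ^ 2)⁻¹ := tsum_nonneg fun k => by positivity
  rw [digamma_add_sub_digamma_eq hr hx]
  positivity

lemma digamma_add_sub_digamma_le (hr : 0 < r) (hx : 1 ≤ x) :
    digamma (x + r) - digamma r ≤ x / r := by
  rw [div_eq_mul_inv]
  refine hasSum_le (fun k => ?_) (hasSum_digamma_sub_digamma (by positivity) hr)
    ((hasSum_inv_add_mul_add_one hr).mul_left x)
  rw [add_sub_cancel_right, mul_comm (x + r + k)]
  gcongr x * (_ * ?_)⁻¹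
  linarith

lemma hasSum_digamma_add_sub_digamma_sub (hr : 0 ≤ r) (hx : 0 < x) :
    HasSum (fun k : ℕ => r * (1 - r) * ((x + k) * (x + k + 1) * (x + r + k))⁻¹)
      (digamma (x + r) - digamma x - r / x) := by
  rw [div_eq_mul_inv]
  refine ((hasSum_digamma_sub_digamma (by positivity) hx).sub
    ((hasSum_inv_add_mul_add_one hx).mul_left r)).congr_fun fun k => ?_
  have : 0 < x + k := by positivity
  field_simp
  ring

lemma tsum_inv_mul_mul_le (hr : 0 ≤ r) (hx : 0 < x) :
    ∑' k : ℕ, ((x + k) * (x + k + 1) * (x + r + k))⁻¹ ≤ (x * (x + r))⁻¹ := by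
  have hterm (k : ℕ) : ((x + k) * (x + k + 1) * (x + r + k))⁻¹
      ≤ (x + r)⁻¹ * ((x + k) * (x + k + 1))⁻¹ := by
    rw [← mul_inv, mul_comm (x + r)]
    gcongr (_ * ?_)⁻¹
    simp
  have hmaj := (hasSum_inv_add_mul_add_one hx).mul_left (x + r)⁻¹
  refine (Summable.tsum_le_tsum hterm (hmaj.summable.of_nonneg_of_le (fun k => by positivity) hterm)
    hmaj.summable).trans_eq ?_
  rw [hmaj.tsum_eq, mul_inv, mul_comm]

lemma digamma_sub_mul_digamma_sub_le (hr : 0 < r) (hx : 1 ≤ x) :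
    (digamma (x + r) - digamma x - r / x) * (digamma (x + r) - digamma r)
      ≤ x / (r * (x + r) ^ 2) := by
  have hx0 : 0 < x := by linarith
  set S := ∑' k : ℕ, ((x + k) * (x + k + 1) * (x + r + k))⁻¹
  set D := digamma (x + r) - digamma r
  have hE : digamma (x + r) - digamma x - r / x = r * (1 - r) * S := by
    rw [← (hasSum_digamma_add_sub_digamma_sub hr.le hx0).tsum_eq, tsum_mul_left]
  have hS0 : 0 ≤ S := tsum_nonneg fun k => by positivity
  have hS : S ≤ (x * (x + r))⁻¹ := tsum_inv_mul_mul_le hr.le hx0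
  have hD0 : 0 < D := digamma_add_sub_digamma_pos hr hx0
  have hD : D ≤ x / r := digamma_add_sub_digamma_le hr hx
  rw [hE]
  rcases le_or_gt r 1 with hr1 | hr1
  · have h1r : 0 ≤ 1 - r := by linarith
    calc r * (1 - r) * S * D ≤ r * (1 - r) * (x * (x + r))⁻¹ * (x / r) := by gcongr
      _ = (1 - r) / (x + r) := by field_simp
      _ ≤ x / (r * (x + r) ^ 2) := by
        rw [div_le_div_iff₀ (by positivity) (by positivity)]
        nlinarith [sq_nonneg (2 * r - 1), mul_nonneg hr.le h1r]
  · have : r * (1 - r) * S * D ≤ 0 :=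
      mul_nonpos_of_nonpos_of_nonneg
        (mul_nonpos_of_nonpos_of_nonneg (by nlinarith) hS0) hD0.le
    exact this.trans (by positivity)

lemma inv_lt_tsum_inv_mul_add_sq (hr : 0 < r) (hx : 0 < x) :
    (r * (x + r) ^ 2)⁻¹ < ∑' k : ℕ, ((r + k) * (x + r + k) ^ 2)⁻¹ := by
  have h := (summable_inv_mul_add_sq hr hx).sum_le_tsum (Finset.range 2) fun k _ => by positivity
  have : 0 < ((r + 1) * (x + r + 1) ^ 2)⁻¹ := by positivity
  simp only [Finset.sum_range_succ, Finset.sum_range_zero, Nat.cast_zero, Nat.cast_one,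
    add_zero, zero_add] at h
  linarith

lemma digamma_sub_add_trigamma_div_neg (hr : 0 < r) (hx : 1 ≤ x) :
    digamma (x + r) - digamma x - (r + 1) / x
      + trigamma (x + r) / (digamma (x + r) - digamma r) < 0 := by
  have hx0 : 0 < x := by linarith
  set D := digamma (x + r) - digamma r
  set T := ∑' k : ℕ, ((r + k) * (x + r + k) ^ 2)⁻¹
  have hD0 : 0 < D := digamma_add_sub_digamma_pos hr hx0
  have hDeq : D = x * trigamma (x + r) + x ^ 2 * T := digamma_add_sub_digamma_eq hr hx0
  have hED : (digamma (x + r) - digamma x - r / x) * D < x * T :=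
    (digamma_sub_mul_digamma_sub_le hr hx).trans_lt <| by
      rw [div_eq_mul_inv]
      exact mul_lt_mul_of_pos_left (inv_lt_tsum_inv_mul_add_sq hr hx0) hx0
  have hkey : digamma (x + r) - digamma x - (r + 1) / x + trigamma (x + r) / D
      = ((digamma (x + r) - digamma x - r / x) * D - x * T) / D := by
    field_simp
    linear_combination -hDeq
  rw [hkey]
  exact div_neg_of_neg_of_pos (by linarith) hD0

end DigammaInequalities

noncomputable def logHypDivRpow (r x : ℝ) : ℝ :=
  log (Gamma (x + r)) - log (Gamma x) - (r + 1) * log x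
    + log (digamma (x + r) - digamma r) - log (Gamma r)

lemma hyp_div_rpow_eq_exp {r x : ℝ} (hr : 0 < r) (hx : 0 < x) :
    hyp r x / x ^ r = exp (logHypDivRpow r x) := by
  have hD := digamma_add_sub_digamma_pos hr hx
  have hGx := Gamma_pos_of_pos hx
  have hGxr := Gamma_pos_of_pos (by positivity : 0 < x + r)
  have hGr := Gamma_pos_of_pos hr
  have hpow : exp ((r + 1) * log x) = x ^ r * x := by
    rw [mul_comm, ← rpow_def_of_pos hx, rpow_add_one hx.ne']
  rw [logHypDivRpow, exp_sub, exp_add, exp_sub, exp_sub, exp_log hGxr, exp_log hGx, exp_log hD,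
    exp_log hGr, hpow, hyp, if_neg hr.ne', rise]
  field_simp

lemma hasDerivAt_logHypDivRpow {r x : ℝ} (hr : 0 < r) (hx : 0 < x) :
    HasDerivAt (logHypDivRpow r) (digamma (x + r) - digamma x - (r + 1) / x
      + trigamma (x + r) / (digamma (x + r) - digamma r)) x := by
  have hxr : 0 < x + r := by positivity
  have hD : HasDerivAt (fun y => digamma (y + r) - digamma r) (trigamma (x + r)) x :=
    (hasDerivAt_digamma hxr).comp_add_const x r |>.sub_const _
  have hlog : HasDerivAt (fun y => (r + 1) * log y) ((r + 1) / x) x := by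
    simpa [div_eq_mul_inv] using (hasDerivAt_log hx.ne').const_mul (r + 1)
  exact ((((hasDerivAt_log_Gamma hxr).comp_add_const x r).sub (hasDerivAt_log_Gamma hx)).sub
    hlog |>.add (hD.log (digamma_add_sub_digamma_pos hr hx).ne')).sub_const _

lemma strictAntiOn_hyp_div_rpow {r : ℝ} (hr : 0 ≤ r) :
    StrictAntiOn (fun x => hyp r x / x ^ r) (Ici 1) := by
  rcases hr.eq_or_lt with rfl | hr
  · intro a ha b _ hab
    simp only [hyp, if_pos, rpow_zero, div_one]
    exact one_div_lt_one_div_of_lt (zero_lt_one.trans_le ha) hab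
  have hlog : StrictAntiOn (logHypDivRpow r) (Ici 1) := by
    refine strictAntiOn_of_deriv_neg (convex_Ici 1) (fun x hx => ?_) fun x hx => ?_
    · exact (hasDerivAt_logHypDivRpow hr (zero_lt_one.trans_le hx)).continuousAt.continuousWithinAt
    · rw [interior_Ici] at hx
      rw [(hasDerivAt_logHypDivRpow hr (zero_lt_one.trans hx)).deriv]
      exact digamma_sub_add_trigamma_div_neg hr hx.le
  intro a ha b hb hab
  simp only [hyp_div_rpow_eq_exp hr (zero_lt_one.trans_le ha),
    hyp_div_rpow_eq_exp hr (zero_lt_one.trans_le hb)]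
  exact exp_lt_exp.2 (hlog ha hb hab)

lemma StrictAntiOn.intervalIntegral_lt {f : ℝ → ℝ} {a b : ℝ} (hab : a < b)
    (hf : StrictAntiOn f (Icc a b)) : ∫ x in a..b, f x < (b - a) * f a := by
  have hint : IntervalIntegrable f volume a b :=
    (hf.antitoneOn.mono (uIcc_of_le hab.le).subset).intervalIntegrable
  have hpos := intervalIntegral.intervalIntegral_pos_of_pos_on (f := fun x => f a - f x)
    (intervalIntegrable_const.sub hint)
    (fun x hx => sub_pos.2 (hf (left_mem_Icc.2 hab.le) (Ioo_subset_Icc_self hx) hx.1)) hab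
  rw [intervalIntegral.integral_sub intervalIntegrable_const hint,
    intervalIntegral.integral_const, smul_eq_mul] at hpos
  linarith

lemma StrictAntiOn.lt_intervalIntegral {f : ℝ → ℝ} {a b : ℝ} (hab : a < b)
    (hf : StrictAntiOn f (Icc a b)) : (b - a) * f b < ∫ x in a..b, f x := by
  have hint : IntervalIntegrable f volume a b :=
    (hf.antitoneOn.mono (uIcc_of_le hab.le).subset).intervalIntegrable
  have hpos := intervalIntegral.intervalIntegral_pos_of_pos_on (f := fun x => f x - f b)
    (hint.sub intervalIntegrable_const)
    (fun x hx => sub_pos.2 (hf (Ioo_subset_Icc_self hx) (right_mem_Icc.2 hab.le) hx.2)) hab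
  rw [intervalIntegral.integral_sub hint intervalIntegrable_const,
    intervalIntegral.integral_const, smul_eq_mul] at hpos
  linarith

lemma StrictMono.lt_of_tendsto {α : Type*} [TopologicalSpace α] [Preorder α]
    [OrderClosedTopology α] {u : ℕ → α} {a : α} (hu : StrictMono u)
    (h : Tendsto u atTop (𝓝 a)) (k : ℕ) : u k < a :=
  (hu k.lt_succ_self).trans_le (hu.monotone.ge_of_tendsto h (k + 1))

lemma StrictAnti.lt_of_tendsto {α : Type*} [TopologicalSpace α] [Preorder α]
    [OrderClosedTopology α] {u : ℕ → α} {a : α} (hu : StrictAnti u)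
    (h : Tendsto u atTop (𝓝 a)) (k : ℕ) : a < u k :=
  (hu.antitone.le_of_tendsto h (k + 1)).trans_lt (hu k.lt_succ_self)

section Sequences

variable {r : ℝ}

lemma strictAntiOn_hyp_div_rpow_Icc (hr : 0 ≤ r) {m : ℕ} (hm : 1 ≤ m) :
    StrictAntiOn (fun x => hyp r x / x ^ r) (Icc (m : ℝ) (m + 1)) :=
  (strictAntiOn_hyp_div_rpow hr).mono fun _ hx => (Nat.one_le_cast.2 hm).trans hx.1

lemma integral_hyp_div_rpow_add_adjacent (hr : 0 ≤ r) {m : ℕ} (hm : 1 ≤ m) :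
    ∫ x in (1 : ℝ)..(m + 1 : ℝ), hyp r x / x ^ r
      = (∫ x in (1 : ℝ)..(m : ℝ), hyp r x / x ^ r)
        + ∫ x in (m : ℝ)..(m + 1 : ℝ), hyp r x / x ^ r := by
  have hint {a b : ℝ} (ha : 1 ≤ a) (hb : 1 ≤ b) :
      IntervalIntegrable (fun x => hyp r x / x ^ r) volume a b :=
    ((strictAntiOn_hyp_div_rpow hr).antitoneOn.mono
      fun _ hx => (le_min ha hb).trans hx.1).intervalIntegrable
  have hm' : (1 : ℝ) ≤ m := Nat.one_le_cast.2 hm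
  exact (intervalIntegral.integral_add_adjacent_intervals (hint le_rfl hm')
    (hint hm' (by linarith))).symm

lemma yseq_eq_zseq_add {m : ℕ} (hm : 1 ≤ m) : yseq r m = zseq r m + hyp r m / (m : ℝ) ^ r := by
  obtain ⟨k, rfl⟩ : ∃ k, m = k + 1 := ⟨m - 1, by omega⟩
  rw [yseq, zseq, Nat.add_sub_cancel, Finset.sum_Icc_succ_top (by omega)]
  ring

lemma zseq_succ (hr : 0 ≤ r) {m : ℕ} (hm : 1 ≤ m) :
    zseq r (m + 1) = yseq r m - ∫ x in (m : ℝ)..(m + 1 : ℝ), hyp r x / x ^ r := by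
  rw [zseq, yseq, Nat.add_sub_cancel, Nat.cast_add_one, integral_hyp_div_rpow_add_adjacent hr hm]
  ring

lemma strictMono_zseq_succ (hr : 0 ≤ r) : StrictMono fun k : ℕ => zseq r (k + 1) := by
  refine strictMono_nat_of_lt_succ fun k => ?_
  have h := (strictAntiOn_hyp_div_rpow_Icc hr (by omega : 1 ≤ k + 1)).intervalIntegral_lt
    (by linarith)
  have hyz := yseq_eq_zseq_add (r := r) (by omega : 1 ≤ k + 1)
  rw [zseq_succ hr (by omega : 1 ≤ k + 1)]
  push_cast at h hyz ⊢
  linarith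

lemma strictAnti_yseq_succ (hr : 0 ≤ r) : StrictAnti fun k : ℕ => yseq r (k + 1) := by
  refine strictAnti_nat_of_succ_lt fun k => ?_
  have h := (strictAntiOn_hyp_div_rpow_Icc hr (by omega : 1 ≤ k + 1)).lt_intervalIntegral
    (by linarith)
  have hyz := yseq_eq_zseq_add (r := r) (by omega : 1 ≤ k + 1 + 1)
  have hz := zseq_succ hr (by omega : 1 ≤ k + 1)
  push_cast at h hyz hz ⊢
  linarith

end Sequences

theorem yz_estimates (r : ℝ) (hr : 0 ≤ r) (γh : ℝ)
    (hy : Tendsto (yseq r) atTop (𝓝 γh)) (hz : Tendsto (zseq r) atTop (𝓝 γh))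
    (n : ℕ) (hn : 1 ≤ n) :
    let A : ℝ := hyp r n / (n : ℝ) ^ r - ∫ x in (n : ℝ)..(n + 1 : ℝ), hyp r x / x ^ r
    let B : ℝ := ∫ x in (n : ℝ)..(n + 1 : ℝ), hyp r x / x ^ r
    (A < γh - zseq r n ∧ γh - zseq r n < A + hyp r (n + 1) / ((n : ℝ) + 1) ^ r) ∧
    (B - hyp r (n + 1) / ((n : ℝ) + 1) ^ r < yseq r n - γh ∧ yseq r n - γh < B) := by
  intro A B
  have hz_lt : zseq r (n + 1) < γh :=
    (strictMono_zseq_succ hr).lt_of_tendsto (hz.comp (tendsto_add_atTop_nat 1)) n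
  have hy_gt : γh < yseq r (n + 1) :=
    (strictAnti_yseq_succ hr).lt_of_tendsto (hy.comp (tendsto_add_atTop_nat 1)) n
  have hzs := zseq_succ hr hn
  have hyz := yseq_eq_zseq_add (r := r) hn
  have hyz' := yseq_eq_zseq_add (r := r) (Nat.le_add_left 1 n)
  push_cast at hyz'
  refine ⟨⟨?_, ?_⟩, ?_, ?_⟩ <;> linarith
end

section
/- For all natural numbers n ≥ 1 and r ≥ 1, ∑_{k=1}^n H_{k+r−1}/k = (H_n² + H_n^{(2)})/2 + ∑_{j=1}^{r−1} (H_j/j + H_{j−1}/(j+n)) − H_{r−1}·(H_{n+r−1} − H_n), where H_m = ∑_{k=1}^m 1/k are the harmonic numbers, H_m^{(2)} = ∑_{k=1}^m 1/k², and empty sums are zero (H_0 = 0). -/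
open MeasureTheory Filter Topology

/-- The `m`-th harmonic number `H_m = ∑_{k=1}^m 1/k` (with `H 0 = 0`). -/
noncomputable def H (m : ℕ) : ℝ := ∑ k ∈ Finset.Icc 1 m, (1 : ℝ) / k

/-- The generalized harmonic number `H_m^{(s)} = ∑_{k=1}^m 1/k^s`. -/
noncomputable def Hgen (m s : ℕ) : ℝ := ∑ k ∈ Finset.Icc 1 m, (1 : ℝ) / (k : ℝ) ^ s

/-- The unsigned Stirling numbers of the first kind, via the recurrence
`[n+1, k+1] = n·[n, k+1] + [n, k]`, `[0,0] = 1`. -/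
def stirling1 : ℕ → ℕ → ℕ
  | 0, 0 => 1
  | 0, _ + 1 => 0
  | _ + 1, 0 => 0
  | n + 1, k + 1 => n * stirling1 n (k + 1) + stirling1 n k

/-!
Induct on the shift. Raising it by one adds `∑_{k ≤ n} 1/(k(k+r))`, which telescopes to
`(H_n + H_r - H_{n+r})/r` via `1/(k(k+r)) = (1/k - 1/(k+r))/r`; the unshifted sum
`∑ H_k/k = (H_n² + H_n^{(2)})/2` follows from `H_k² - H_{k-1}² = 2H_k/k - 1/k²`.
-/

@[simp]
lemma H_zero : H 0 = 0 := by
  simp [H]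

lemma H_succ (m : ℕ) : H (m + 1) = H m + 1 / (m + 1) := by
  rw [H, H, Finset.sum_Icc_succ_top (by omega)]
  push_cast
  ring

lemma Hgen_succ (m s : ℕ) : Hgen (m + 1) s = Hgen m s + 1 / ((m : ℝ) + 1) ^ s := by
  rw [Hgen, Hgen, Finset.sum_Icc_succ_top (by omega)]
  push_cast
  ring

lemma sum_H_div_self (n : ℕ) :
    ∑ k ∈ Finset.Icc 1 n, H k / k = (H n ^ 2 + Hgen n 2) / 2 := by
  induction n with
  | zero => simp [Hgen]
  | succ n ih =>
    rw [Finset.sum_Icc_succ_top (by omega), ih, H_succ, Hgen_succ]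
    push_cast
    field_simp
    ring

lemma sum_one_div_mul_add_self {r : ℕ} (hr : r ≠ 0) (n : ℕ) :
    ∑ k ∈ Finset.Icc 1 n, 1 / ((k : ℝ) * (k + r)) = (H n + H r - H (n + r)) / r := by
  induction n with
  | zero => simp
  | succ n ih =>
    rw [Finset.sum_Icc_succ_top (by omega), ih, Nat.add_right_comm, H_succ, H_succ]
    push_cast
    field_simp
    ring

lemma sum_H_add_div_self (n s : ℕ) :
    ∑ k ∈ Finset.Icc 1 n, H (k + s) / k =
      (H n ^ 2 + Hgen n 2) / 2 +
        ∑ j ∈ Finset.Icc 1 s, (H j / j + H (j - 1) / ((j : ℝ) + n)) -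
        H s * (H (n + s) - H n) := by
  induction s with
  | zero => simpa using sum_H_div_self n
  | succ s ih =>
    have shift : ∀ k ∈ Finset.Icc 1 n,
        H (k + (s + 1)) / k = H (k + s) / k + 1 / ((k : ℝ) * (k + (s + 1 : ℕ))) := by
      intro k hk_mem
      have hk : (k : ℝ) ≠ 0 := by
        rw [Finset.mem_Icc] at hk_mem
        exact_mod_cast (by omega : k ≠ 0)
      rw [← add_assoc, H_succ]
      push_cast
      field_simp
      ring
    rw [Finset.sum_congr rfl shift, Finset.sum_add_distrib, ih,
      sum_one_div_mul_add_self s.add_one_ne_zero, Finset.sum_Icc_succ_top (by omega),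
      Nat.add_sub_cancel, ← add_assoc n s 1, H_succ s, H_succ (n + s)]
    push_cast
    field_simp
    ring

theorem harmonic_shift_sum_general (n r : ℕ) (hr : 1 ≤ r) :
    ∑ k ∈ Finset.Icc 1 n, H (k + r - 1) / (k : ℝ) =
      ((H n) ^ 2 + Hgen n 2) / 2 +
        ∑ j ∈ Finset.Icc 1 (r - 1), (H j / (j : ℝ) + H (j - 1) / ((j : ℝ) + n)) -
        H (r - 1) * (H (n + r - 1) - H n) := by
  obtain ⟨s, rfl⟩ := Nat.exists_eq_add_of_le' hr
  simpa only [← add_assoc, Nat.add_sub_cancel] using sum_H_add_div_self n s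

theorem harmonic_shift_sum (n r : ℕ) (hn : 1 ≤ n) (hr : 1 ≤ r) :
    ∑ k ∈ Finset.Icc 1 n, H (k + r - 1) / (k : ℝ) =
      ((H n) ^ 2 + Hgen n 2) / 2 +
        ∑ j ∈ Finset.Icc 1 (r - 1), (H j / (j : ℝ) + H (j - 1) / ((j : ℝ) + n)) -
        H (r - 1) * (H (n + r - 1) - H n) :=
  harmonic_shift_sum_general n r hr
end
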